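/- Let φ : ℝ → ℂ be continuous with compact support satisfying the interpolation condition φ(k) = δ[k] for k ∈ ℤ, and suppose ω ↦ Σ_{k∈ℤ} |φ̂(ω − 2kπ)|² is continuous. Then inf_{ω∈ℝ} Σ_{k∈ℤ} |φ̂(ω − 2kπ)|² > 0. -/

import Mathlib

/-!
Fix `ω` and let `g t = φ t e^{-iωt}`, so that `φ̂ (ω - 2kπ) = 𝓕 g (-k)` in Mathlib's normalisation
`𝓕 g ξ = ∫ g t e^{-2πiξt} dt`. Like `φ`, `g` interpolates the Kronecker delta, so Poisson summation
gives `∑ₙ 𝓕 g n = ∑ₙ g n = 1`: some shift `φ̂ (ω - 2kπ)` is nonzero. The values `𝓕 g n` are the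
Fourier coefficients of the continuous `1`-periodisation of `g`, so by Parseval they are square
summable, and the series `S ω = ∑ₖ |φ̂ (ω - 2kπ)|²` is strictly positive. Being continuous and
`2π`-periodic, `S` attains its infimum.
-/

open scoped Real FourierTransform Pointwise
open Complex AddCircle

theorem HasCompactSupport.summable_norm_restrict_comp_addRight {E : Type*}
    [NormedAddCommGroup E] {f : C(ℝ, E)} (hf : HasCompactSupport f)
    (K : TopologicalSpace.Compacts ℝ) :
    Summable fun n : ℤ => ‖(f.comp (ContinuousMap.addRight n)).restrict K‖ := by
  have hfin : {n : ℤ | (n : ℝ) ∈ tsupport f + -(K : Set ℝ)}.Finite :=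
    (Int.isClosedEmbedding_coe_real.isCompact_preimage
      (hf.isCompact.add K.isCompact.neg)).finite_of_discrete
  refine summable_of_hasFiniteSupport (hfin.subset fun n hn => ?_)
  by_contra hn'
  refine hn (norm_eq_zero.mpr (ContinuousMap.ext fun x => ?_))
  show f (x + n) = 0
  refine image_eq_zero_of_notMem_tsupport fun hx => hn' ?_
  simpa using Set.add_mem_add hx (Set.neg_mem_neg.mpr x.2)

theorem summable_sq_norm_fourierCoeff {T : ℝ} [Fact (0 < T)] (f : C(AddCircle T, ℂ)) :
    Summable fun n : ℤ => ‖fourierCoeff f n‖ ^ 2 := by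
  simpa only [fourierCoeff_toLp] using
    (hasSum_sq_fourierCoeff (ContinuousMap.toLp (E := ℂ) 2 haarAddCircle ℂ f)).summable

namespace Real

variable {f : C(ℝ, ℂ)}
  (h_norm : ∀ K : TopologicalSpace.Compacts ℝ,
    Summable fun n : ℤ => ‖(f.comp (ContinuousMap.addRight n)).restrict K‖)
include h_norm

theorem summable_sq_norm_fourier_intCast : Summable fun n : ℤ => ‖𝓕 (f : ℝ → ℂ) n‖ ^ 2 := by
  let F : C(UnitAddCircle, ℂ) :=
    ⟨(f.periodic_tsum_comp_add_zsmul 1).lift, continuous_coinduced_dom.mpr (map_continuous _)⟩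
  convert summable_sq_norm_fourierCoeff F using 4 with n
  exact (fourierCoeff_tsum_comp_add h_norm n).symm

theorem exists_fourier_intCast_ne_zero (h : ∑' n : ℤ, f n ≠ 0) :
    ∃ n : ℤ, 𝓕 (f : ℝ → ℂ) n ≠ 0 := by
  by_contra! hzero
  have h_sum : Summable fun n : ℤ => 𝓕 (f : ℝ → ℂ) n := by simp [hzero]
  apply h
  simpa [hzero] using tsum_eq_tsum_fourier h_norm h_sum 0

theorem tsum_sq_norm_fourier_intCast_pos (h : ∑' n : ℤ, f n ≠ 0) :
    0 < ∑' n : ℤ, ‖𝓕 (f : ℝ → ℂ) n‖ ^ 2 := by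
  obtain ⟨n, hn⟩ := exists_fourier_intCast_ne_zero h_norm h
  exact (summable_sq_norm_fourier_intCast h_norm).tsum_pos (fun _ => by positivity) n
    (by positivity)

end Real

theorem Real.fourier_mul_exp_neg (φ : ℝ → ℂ) (ω ξ : ℝ) :
    𝓕 (fun t : ℝ => φ t * Complex.exp (-I * ω * t)) (-ξ) =
      ∫ t : ℝ, φ t * Complex.exp (-I * ↑(ω - 2 * ξ * π) * t) := by
  rw [Real.fourier_real_eq_integral_exp_smul]
  congr 1 with t
  rw [smul_eq_mul, mul_left_comm, ← Complex.exp_add]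
  push_cast
  ring_nf

theorem Function.periodic_tsum_comp_sub_int_mul {α : Type*} [AddCommMonoid α]
    [TopologicalSpace α] (F : ℝ → α) (c : ℝ) :
    Function.Periodic (fun x => ∑' k : ℤ, F (x - k * c)) c := by
  intro x
  dsimp only
  rw [← (Equiv.addRight (1 : ℤ)).tsum_eq]
  congr! 2 with k
  rw [Equiv.coe_addRight]
  push_cast
  congr 1
  ring

theorem Function.Periodic.ciInf_pos {f : ℝ → ℝ} {c : ℝ} (hp : Function.Periodic f c)
    (hc : c ≠ 0) (hf : Continuous f) (hpos : ∀ x, 0 < f x) : 0 < ⨅ x, f x := by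
  obtain ⟨x, hx⟩ := (hp.compact_of_continuous hc hf).sInf_mem (Set.range_nonempty f)
  rw [iInf, ← hx]
  exact hpos x

theorem lower_riesz_bound
    (φ : ℝ → ℂ) (hcont : Continuous φ) (hsupp : HasCompactSupport φ)
    (hinterp : ∀ k : ℤ, φ k = if k = 0 then 1 else 0)
    (φhat : ℝ → ℂ)
    (hφhat : ∀ ω : ℝ, φhat ω = ∫ t : ℝ, φ t * Complex.exp (-Complex.I * ω * t))
    (hScont : Continuous (fun ω : ℝ => ∑' k : ℤ, ‖φhat (ω - 2 * k * π)‖ ^ 2)) :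
    0 < ⨅ ω : ℝ, ∑' k : ℤ, ‖φhat (ω - 2 * k * π)‖ ^ 2 := by
  let g (ω : ℝ) : C(ℝ, ℂ) := ⟨fun t => φ t * Complex.exp (-I * ω * t), by fun_prop⟩
  have hφhat_eq (ω : ℝ) (k : ℤ) : φhat (ω - 2 * k * π) = 𝓕 (g ω : ℝ → ℂ) ((-k : ℤ) : ℝ) := by
    rw [hφhat, Int.cast_neg, ← Real.fourier_mul_exp_neg]
    rfl
  have hg_samples (ω : ℝ) : ∑' n : ℤ, g ω n = 1 := by
    rw [tsum_eq_single 0 fun n hn => by simp [g, hinterp, hn]]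
    simpa [g] using hinterp 0
  have hpos (ω : ℝ) : 0 < ∑' k : ℤ, ‖φhat (ω - 2 * k * π)‖ ^ 2 := by
    have h_norm := HasCompactSupport.summable_norm_restrict_comp_addRight (f := g ω)
      hsupp.mul_right
    have hpos_fourier := Real.tsum_sq_norm_fourier_intCast_pos h_norm (by simp [hg_samples])
    rw [← (Equiv.neg ℤ).tsum_eq] at hpos_fourier
    simpa only [hφhat_eq, Equiv.neg_apply] using hpos_fourier
  have hper : Function.Periodic (fun ω => ∑' k : ℤ, ‖φhat (ω - 2 * k * π)‖ ^ 2) (2 * π) := by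
    convert Function.periodic_tsum_comp_sub_int_mul (fun ω => ‖φhat ω‖ ^ 2) (2 * π) using 6
    ring_nf
  exact hper.ciInf_pos Real.two_pi_pos.ne' hScont hpos
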